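/- If ŵ is a minimal coset representative for a coset in W_{⊥φ}\Ŵ_{⊥φ}, then ŵρ lies in the dominant chamber C = {λ : (λ|α_i) ≥ 0 for all simple roots α_i}. -/

import Mathlib

open scoped RealInnerProductSpace BigOperators

noncomputable section

variable (V : Type) [NormedAddCommGroup V] [InnerProductSpace ℝ V] [FiniteDimensional ℝ V]

/-- A finite, reduced, crystallographic root system in a Euclidean space `V`,
with a chosen set of positive roots and the corresponding simple roots. -/
structure RootSystemData where
  /-- the rank -/
  l : ℕ
  /-- the simple roots -/
  simple : Fin l → V
  /-- the set of roots -/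
  roots : Finset V
  /-- the set of positive roots -/
  pos : Finset V
  pos_subset : pos ⊆ roots
  simple_mem_pos : ∀ i, simple i ∈ pos
  simple_indep : LinearIndependent ℝ simple
  span_roots : Submodule.span ℝ (roots : Set V) = ⊤
  root_ne_zero : ∀ α ∈ roots, α ≠ 0
  neg_mem : ∀ α ∈ roots, -α ∈ roots
  pos_iff : ∀ α ∈ roots, (α ∈ pos ↔ -α ∉ pos)
  pos_combo : ∀ α ∈ pos, ∃ c : Fin l → ℕ, α = ∑ i, (c i : ℝ) • simple i
  crystal : ∀ α ∈ roots, ∀ β ∈ roots, ∃ n : ℤ, 2 * ⟪β, α⟫ / ⟪α, α⟫ = (n : ℝ)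
  reflect_mem : ∀ α ∈ roots, ∀ β ∈ roots, β - (2 * ⟪β, α⟫ / ⟪α, α⟫) • α ∈ roots
  sub_mem : ∀ α ∈ roots, ∀ β ∈ roots, 0 < ⟪α, β⟫ → α ≠ β → α - β ∈ roots
  reduced : ∀ α ∈ roots, ∀ c : ℝ, c • α ∈ roots → c = 1 ∨ c = -1

namespace RootSystemData

open Classical

variable {V}

/-- The pairing `⟨λ, α∨⟩ = 2(λ|α)/(α|α)` of a vector with the coroot of `α`. -/
def pair (lam α : V) : ℝ := 2 * ⟪lam, α⟫ / ⟪α, α⟫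

/-- The orthogonal reflection in the hyperplane orthogonal to `α`. -/
def sRefl (α : V) : V ≃ₗᵢ[ℝ] V := Submodule.reflection ((ℝ ∙ α)ᗮ)

variable (R : RootSystemData V)

/-- Half the sum of the positive roots. -/
def ρ : V := (2 : ℝ)⁻¹ • ∑ φ ∈ R.pos, φ

/-- The (finite) Weyl group, generated by the simple reflections. -/
def W : Subgroup (V ≃ₗᵢ[ℝ] V) :=
  Subgroup.closure (Set.range fun i => sRefl (R.simple i))

/-- The length of a Weyl group element: the minimal length of a word in the
simple reflections expressing it. -/
def len (w : V ≃ₗᵢ[ℝ] V) : ℕ :=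
  sInf {k : ℕ | ∃ f : Fin k → Fin R.l,
    w = (List.ofFn fun j => sRefl (R.simple (f j))).prod}

/-- The inversion set `Φ_w = Φ₊ ∩ wΦ₋`. -/
def inversions (w : V ≃ₗᵢ[ℝ] V) : Finset V :=
  R.pos.filter fun x => -(w.symm x) ∈ R.pos

end RootSystemData

/-- An irreducible root system, together with its highest root `θ`. -/
structure IrredRootSystemData extends RootSystemData V where
  /-- the highest root -/
  θ : V
  θ_mem_pos : θ ∈ pos
  θ_highest : ∀ φ ∈ pos, ∃ c : Fin l → ℕ, θ - φ = ∑ i, (c i : ℝ) • simple i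
  θ_long : ∀ φ ∈ roots, ‖φ‖ ≤ ‖θ‖
  θ_dominant : ∀ i, 0 ≤ ⟪θ, simple i⟫
  irreducible : ∀ s : Finset V, s ⊆ roots →
      (∀ α ∈ s, ∀ β ∈ roots, β ∉ s → ⟪α, β⟫ = 0) → s = ∅ ∨ s = roots

namespace IrredRootSystemData

variable {V} (R : IrredRootSystemData V)

/-- The affine functional `L(φ) = 2(θ−φ|ρ)/(θ|θ)`. -/
def L (φ : V) : ℝ := 2 * ⟪R.θ - φ, R.toRootSystemData.ρ⟫ / ⟪R.θ, R.θ⟫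

/-- A root is long if it has the same length as the highest root. -/
def IsLong (φ : V) : Prop := ‖φ‖ = ‖R.θ‖

/-- The dual Coxeter number `g = ⟨ρ, θ∨⟩ + 1`. -/
def dualCox : ℝ := RootSystemData.pair R.toRootSystemData.ρ R.θ + 1

/-- The affine reflection `s₀(λ) = λ − (⟨λ,θ∨⟩ − g)θ` (scaled so that `s₀ρ = ρ + θ`). -/
def s0 (lam : V) : V := lam - (RootSystemData.pair lam R.θ - R.dualCox) • R.θ

end IrredRootSystemData

namespace IrredRootSystemData

variable {V} (R : IrredRootSystemData V)

/-- A simple reflection, viewed as an affine transformation. -/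
def affSimple (i : Fin R.l) : V ≃ᵃ[ℝ] V :=
  (RootSystemData.sRefl (R.simple i)).toLinearEquiv.toAffineEquiv

/-- The affine reflection `s₀ : λ ↦ s_θ λ + gθ` as an affine transformation. -/
def affS0 : V ≃ᵃ[ℝ] V :=
  ((RootSystemData.sRefl R.θ).toLinearEquiv.toAffineEquiv).trans
    (AffineEquiv.constVAdd ℝ V (R.dualCox • R.θ))

/-- The subgroup `Ŵ_{⊥φ}` of the affine Weyl group generated by those `s_i`
(`i = 0, …, l`, with `α₀ = −θ`) for which `α_i ⊥ φ`. -/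
def affWperp (φ : V) : Subgroup (V ≃ᵃ[ℝ] V) :=
  Subgroup.closure ({e | ∃ i, ⟪R.simple i, φ⟫ = 0 ∧ e = R.affSimple i} ∪
    {e | ⟪R.θ, φ⟫ = 0 ∧ e = R.affS0})

/-- The subgroup `W_{⊥φ}` generated by the simple reflections `s_i` (`i ≥ 1`)
with `α_i ⊥ φ`, viewed inside the affine Weyl group. -/
def finWperp (φ : V) : Subgroup (V ≃ᵃ[ℝ] V) :=
  Subgroup.closure {e | ∃ i, ⟪R.simple i, φ⟫ = 0 ∧ e = R.affSimple i}

/-- The length of an element of the affine Weyl group: the minimal length of a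
word in the generators `s₀, s₁, …, s_l`. -/
def affLen (wh : V ≃ᵃ[ℝ] V) : ℕ :=
  sInf {k : ℕ | ∃ f : Fin k → (V ≃ᵃ[ℝ] V),
    (∀ j, f j ∈ Set.range R.affSimple ∪ {R.affS0}) ∧ wh = (List.ofFn f).prod}

end IrredRootSystemData

/-! An affine root `(β, n)` is the affine function `x ↦ ⟨x, β∨⟩ + n g`. The generators `sᵢ`, `s₀`
of `Ŵ` are the reflections in the simple affine roots `(αᵢ, 0)` and `(−θ, 1)`, and each of them
maps the positive affine roots other than its own to positive affine roots. Every positive affine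
root is `≥ 0` at `ρ`, which yields the exchange condition: if a positive affine root `a` is
negative at `ŵρ`, then `r_a ŵ` is shorter than `ŵ`.

If `αᵢ ⊥ φ` and `(ŵρ | αᵢ) < 0`, this makes `sᵢŵ` shorter than `ŵ`, although `sᵢ ∈ W_{⊥φ}`.
If `αᵢ` is not orthogonal to `φ`, pull `(αᵢ, 0)` back along a word for `ŵ` in the generators of
`Ŵ_{⊥φ}`: these fix `φ`, so the pulled-back roots are never orthogonal to `φ`, hence never the
simple affine root being crossed, and they stay positive; their value at `ρ` is `≥ 0`. -/

theorem Subgroup.exists_list_of_mem_closure_of_inv_mem {G : Type*} [Group G] {S : Set G}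
    (hS : ∀ s ∈ S, s⁻¹ ∈ S) {x : G} (hx : x ∈ Subgroup.closure S) :
    ∃ l : List G, (∀ y ∈ l, y ∈ S) ∧ l.prod = x := by
  rw [← Subgroup.mem_toSubmonoid, Subgroup.closure_toSubmonoid] at hx
  obtain ⟨l, hl, rfl⟩ := Submonoid.exists_list_of_mem_closure hx
  refine ⟨l, fun y hy => ?_, rfl⟩
  rcases hl y hy with h | h
  · exact h
  · simpa using hS _ h

namespace RootSystemData

variable {E : Type} [NormedAddCommGroup E] [InnerProductSpace ℝ E]

theorem sRefl_apply (α x : E) : sRefl α x = x - pair x α • α := by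
  rw [sRefl, Submodule.reflection_orthogonal_apply, Submodule.reflection_singleton_apply]
  simp only [RCLike.ofReal_real_eq_id, id_eq, ← real_inner_self_eq_norm_sq, pair,
    real_inner_comm α x]
  match_scalars <;> ring

theorem sRefl_sRefl (α x : E) : sRefl α (sRefl α x) = x :=
  Submodule.reflection_reflection _ _

theorem sRefl_self (α : E) : sRefl α α = -α :=
  Submodule.reflection_orthogonalComplement_singleton_eq_neg α

theorem inner_sRefl_left (α x y : E) : ⟪sRefl α x, y⟫ = ⟪x, sRefl α y⟫ := by
  conv_lhs => rw [← sRefl_sRefl α y]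
  exact (sRefl α).inner_map_map x (sRefl α y)

theorem inner_sRefl_of_inner_eq_zero {α φ : E} (h : ⟪α, φ⟫ = 0) (β : E) :
    ⟪sRefl α β, φ⟫ = ⟪β, φ⟫ := by
  simp [sRefl_apply, inner_sub_left, real_inner_smul_left, h]

theorem pair_sRefl (α x β : E) : pair (sRefl α x) β = pair x (sRefl α β) := by
  rw [pair, pair, inner_sRefl_left, (sRefl α).inner_map_map]

theorem pair_sub_smul_left (x y β : E) (c : ℝ) :
    pair (x - c • y) β = pair x β - c * pair y β := by
  simp only [pair, inner_sub_left, real_inner_smul_left]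
  ring

theorem pair_neg_right (x β : E) : pair x (-β) = -pair x β := by
  simp only [pair, inner_neg_right, inner_neg_left, neg_neg]
  ring

theorem pair_neg_left (x β : E) : pair (-x) β = -pair x β := by
  simp only [pair, inner_neg_left]
  ring

theorem sRefl_neg (α : E) : sRefl (-α) = sRefl α := by
  ext x
  simp [sRefl_apply, pair_neg_right]

theorem pair_self {α : E} (hα : α ≠ 0) : pair α α = 2 := by
  rw [pair, mul_div_assoc, div_self (inner_self_ne_zero.2 hα), mul_one]

theorem pair_nonneg_iff {α : E} (hα : α ≠ 0) (x : E) : 0 ≤ pair x α ↔ 0 ≤ ⟪x, α⟫ := by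
  rw [pair, le_div_iff₀ (real_inner_self_pos.2 hα), zero_mul]
  constructor <;> intro h <;> linarith

variable (R : RootSystemData E)

theorem simple_mem_roots (i : Fin R.l) : R.simple i ∈ R.roots :=
  R.pos_subset (R.simple_mem_pos i)

theorem ne_zero_of_mem_pos {β : E} (hβ : β ∈ R.pos) : β ≠ 0 :=
  R.root_ne_zero β (R.pos_subset hβ)

theorem sRefl_mem_roots {α β : E} (hα : α ∈ R.roots) (hβ : β ∈ R.roots) :
    sRefl α β ∈ R.roots := by
  simpa [sRefl_apply, pair] using R.reflect_mem α hα β hβ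

theorem neg_mem_pos_of_not_mem_pos {β : E} (hβ : β ∈ R.roots) (h : β ∉ R.pos) : -β ∈ R.pos := by
  have := R.pos_iff (-β) (R.neg_mem β hβ)
  rw [neg_neg] at this
  exact this.2 h

theorem coeff_add_eq_of_sum_add_sum_eq (c d : Fin R.l → ℕ) (t : Fin R.l → ℝ)
    (h : ∑ i, (c i : ℝ) • R.simple i + ∑ i, (d i : ℝ) • R.simple i = ∑ i, t i • R.simple i)
    (i : Fin R.l) : (c i : ℝ) + d i = t i := by
  refine Fintype.linearIndependent_iffₛ.1 R.simple_indep (fun i => (c i : ℝ) + d i) t ?_ i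
  simpa only [add_smul, Finset.sum_add_distrib] using h

theorem mem_pos_of_nat_combo {β : E} (hβ : β ∈ R.roots) (c : Fin R.l → ℕ)
    (hc : β = ∑ i, (c i : ℝ) • R.simple i) : β ∈ R.pos := by
  by_contra h
  obtain ⟨d, hd⟩ := R.pos_combo (-β) (R.neg_mem_pos_of_not_mem_pos hβ h)
  have hcd := R.coeff_add_eq_of_sum_add_sum_eq c d 0 (by simp [← hc, ← hd])
  have hc0 : ∀ i, (c i : ℝ) = 0 := fun i => by
    have := hcd i
    simp only [Pi.zero_apply] at this
    linarith [(d i).cast_nonneg (α := ℝ), (c i).cast_nonneg (α := ℝ)]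
  exact R.root_ne_zero β hβ (by simp [hc, hc0])

theorem sRefl_simple_mem_pos {β : E} {j : Fin R.l} (hβ : β ∈ R.pos) (hne : β ≠ R.simple j) :
    sRefl (R.simple j) β ∈ R.pos := by
  have hβr := R.pos_subset hβ
  have hroot := R.sRefl_mem_roots (R.simple_mem_roots j) hβr
  by_contra h
  obtain ⟨c, hc⟩ := R.pos_combo β hβ
  obtain ⟨d, hd⟩ := R.pos_combo _ (R.neg_mem_pos_of_not_mem_pos hroot h)
  set p := pair β (R.simple j)
  have hsum : ∑ i, (c i : ℝ) • R.simple i + ∑ i, (d i : ℝ) • R.simple i =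
      ∑ i, (Pi.single j p : Fin R.l → ℝ) i • R.simple i := by
    rw [← hc, ← hd, sRefl_apply, Fintype.sum_eq_single j (fun i hi => by simp [hi])]
    simp [p]
  have hc0 : ∀ i, i ≠ j → (c i : ℝ) = 0 := fun i hi => by
    have := R.coeff_add_eq_of_sum_add_sum_eq c d _ hsum i
    simp only [Pi.single_apply, if_neg hi] at this
    linarith [(d i).cast_nonneg (α := ℝ), (c i).cast_nonneg (α := ℝ)]
  have hβc : β = (c j : ℝ) • R.simple j := by
    rw [hc, Fintype.sum_eq_single j (fun i hi => by simp [hc0 i hi])]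
  rcases R.reduced _ (R.simple_mem_roots j) (c j) (hβc ▸ hβr) with h1 | h1
  · exact hne (by rw [hβc, h1, one_smul])
  · linarith [(c j).cast_nonneg (α := ℝ)]

theorem inner_nat_combo_nonneg {x : E} (hx : ∀ i, 0 ≤ ⟪x, R.simple i⟫) (c : Fin R.l → ℕ) :
    0 ≤ ⟪x, ∑ i, (c i : ℝ) • R.simple i⟫ := by
  rw [inner_sum]
  exact Finset.sum_nonneg fun i _ => by
    rw [real_inner_smul_right]
    exact mul_nonneg (Nat.cast_nonneg _) (hx i)

theorem inner_nonneg_of_mem_pos {x β : E} (hx : ∀ i, 0 ≤ ⟪x, R.simple i⟫) (hβ : β ∈ R.pos) :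
    0 ≤ ⟪x, β⟫ := by
  obtain ⟨c, rfl⟩ := R.pos_combo β hβ
  exact R.inner_nat_combo_nonneg hx c

theorem inner_rho_simple_nonneg (i : Fin R.l) : 0 ≤ ⟪R.ρ, R.simple i⟫ := by
  classical
  set α := R.simple i
  have hαpos : α ∈ R.pos := R.simple_mem_pos i
  have hα : α ≠ 0 := R.ne_zero_of_mem_pos hαpos
  have hmaps : ∀ β ∈ R.pos.erase α, sRefl α β ∈ R.pos.erase α := by
    intro β hβ
    obtain ⟨hne, hβpos⟩ := Finset.mem_erase.1 hβ
    refine Finset.mem_erase.2 ⟨fun h => ?_, R.sRefl_simple_mem_pos hβpos hne⟩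
    have : β = -α := by rw [← sRefl_sRefl α β, h, sRefl_self]
    exact (R.pos_iff α (R.pos_subset hαpos)).1 hαpos (this ▸ hβpos)
  -- `sRefl α` permutes `Φ⁺ \ {α}` and negates `⟪·, α⟫`.
  have hzero : ∑ β ∈ R.pos.erase α, ⟪β, α⟫ = 0 := by
    have := Finset.sum_nbij' (sRefl α) (sRefl α) hmaps hmaps (fun β _ => sRefl_sRefl α β)
      (fun β _ => sRefl_sRefl α β) (g := fun β => -⟪β, α⟫) fun β _ => by
        rw [inner_sRefl_left, sRefl_self, inner_neg_right, neg_neg]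
    rw [Finset.sum_neg_distrib] at this
    linarith
  rw [ρ, real_inner_smul_left, sum_inner, ← Finset.add_sum_erase _ _ hαpos, hzero, add_zero]
  exact mul_nonneg (by norm_num) real_inner_self_nonneg

theorem inner_rho_nonneg {β : E} (hβ : β ∈ R.pos) : 0 ≤ ⟪R.ρ, β⟫ :=
  R.inner_nonneg_of_mem_pos R.inner_rho_simple_nonneg hβ

end RootSystemData

namespace IrredRootSystemData

open RootSystemData

variable {E : Type} [NormedAddCommGroup E] [InnerProductSpace ℝ E] (R : IrredRootSystemData E)

theorem theta_mem_roots : R.θ ∈ R.roots := R.pos_subset R.θ_mem_pos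

theorem theta_ne_zero : R.θ ≠ 0 := R.ne_zero_of_mem_pos R.θ_mem_pos

theorem inner_theta_nonneg {β : E} (hβ : β ∈ R.pos) : 0 ≤ ⟪R.θ, β⟫ :=
  R.inner_nonneg_of_mem_pos R.θ_dominant hβ

theorem theta_sub_mem_pos {γ : E} (hγ : γ ∈ R.pos) (h : R.θ - γ ∈ R.roots) :
    R.θ - γ ∈ R.pos := by
  obtain ⟨c, hc⟩ := R.θ_highest γ hγ
  exact R.mem_pos_of_nat_combo h c hc

theorem inner_rho_add_theta_nonneg {β : E} (hβ : β ∈ R.roots) : 0 ≤ ⟪R.ρ, β + R.θ⟫ := by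
  by_cases hpos : β ∈ R.pos
  · rw [inner_add_right]
    linarith [R.inner_rho_nonneg hpos, R.inner_rho_nonneg R.θ_mem_pos]
  · obtain ⟨c, hc⟩ := R.θ_highest (-β) (R.neg_mem_pos_of_not_mem_pos hβ hpos)
    rw [add_comm, ← sub_neg_eq_add, hc]
    exact R.inner_nat_combo_nonneg R.inner_rho_simple_nonneg c

theorem pair_theta_le_one {β : E} (hβ : β ∈ R.pos) (hne : β ≠ R.θ) : pair β R.θ ≤ 1 := by
  by_contra! h
  obtain ⟨p, hp⟩ := R.crystal R.θ R.theta_mem_roots β (R.pos_subset hβ)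
  rw [pair, hp] at h
  have hp2 : (2 : ℝ) ≤ p := by
    have : (1 : ℤ) < p := by exact_mod_cast h
    exact_mod_cast this
  have hθθ : 0 < ⟪R.θ, R.θ⟫ := real_inner_self_pos.2 R.theta_ne_zero
  have hββ : ⟪β, β⟫ ≤ ⟪R.θ, R.θ⟫ := by
    rw [real_inner_self_eq_norm_sq, real_inner_self_eq_norm_sq]
    exact pow_le_pow_left₀ (norm_nonneg _) (R.θ_long β (R.pos_subset hβ)) 2
  have hge : ⟪R.θ, R.θ⟫ ≤ ⟪β, R.θ⟫ := by
    rw [div_eq_iff hθθ.ne'] at hp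
    nlinarith
  have hcs := real_inner_mul_inner_self_le β R.θ
  -- Cauchy–Schwarz and `‖β‖ ≤ ‖θ‖` force `⟪β, θ⟫ = ⟪θ, θ⟫ = ⟪β, β⟫`, i.e. `β = θ`.
  have hβθ : ⟪β, R.θ⟫ = ⟪R.θ, R.θ⟫ := by nlinarith
  have hββ' : ⟪β, β⟫ = ⟪R.θ, R.θ⟫ := by nlinarith
  have : ⟪β - R.θ, β - R.θ⟫ = 0 := by
    rw [inner_sub_left, inner_sub_right, inner_sub_right, real_inner_comm β R.θ]
    linarith
  exact hne (sub_eq_zero.1 (inner_self_eq_zero.1 this))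

theorem neg_one_le_pair_theta {β : E} (hβ : β ∈ R.roots) (hne : β ≠ -R.θ) :
    -1 ≤ pair β R.θ := by
  by_cases hpos : β ∈ R.pos
  · have := (pair_nonneg_iff R.theta_ne_zero β).2
      (real_inner_comm β R.θ ▸ R.inner_theta_nonneg hpos)
    linarith
  · have := R.pair_theta_le_one (R.neg_mem_pos_of_not_mem_pos hβ hpos)
      (fun h => hne (by rw [← h, neg_neg]))
    rw [pair, inner_neg_left, mul_neg, neg_div] at this
    rw [pair]
    linarith

theorem dualCox_mul_inner_theta :
    R.dualCox * ⟪R.θ, R.θ⟫ = 2 * ⟪R.ρ, R.θ⟫ + ⟪R.θ, R.θ⟫ := by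
  have := real_inner_self_pos.2 R.theta_ne_zero
  rw [dualCox, pair]
  field_simp

theorem dualCox_pos : 0 < R.dualCox := by
  have := real_inner_self_pos.2 R.theta_ne_zero
  have := R.inner_rho_nonneg R.θ_mem_pos
  rw [dualCox, pair]
  positivity

def affVal (a : E × ℝ) (x : E) : ℝ := pair x a.1 + a.2 * R.dualCox

def affRefl (a : E × ℝ) (x : E) : E := x - R.affVal a x • a.1

def affComap (b a : E × ℝ) : E × ℝ := (sRefl b.1 a.1, a.2 - b.2 * pair b.1 a.1)

theorem affVal_affRefl (a b : E × ℝ) (x : E) :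
    R.affVal a (R.affRefl b x) = R.affVal (affComap b a) x := by
  simp only [affRefl, affVal, affComap]
  rw [← pair_sRefl, sRefl_apply, pair_sub_smul_left, pair_sub_smul_left]
  ring

theorem affRefl_affRefl (b : E × ℝ) (x : E) : R.affRefl b (R.affRefl b x) = x := by
  by_cases hb : b.1 = 0
  · simp [affRefl, hb]
  · have hself : R.affVal (affComap b b) x = -R.affVal b x := by
      simp only [affVal, affComap, sRefl_self, pair_neg_right, pair_self hb]
      ring
    rw [affRefl, affVal_affRefl, hself, affRefl, neg_smul, sub_neg_eq_add, sub_add_cancel]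

theorem affRefl_sub_smul (b : E × ℝ) (x v : E) (c : ℝ) :
    R.affRefl b (x - c • v) = R.affRefl b x - c • sRefl b.1 v := by
  simp only [affRefl, affVal, pair_sub_smul_left, sRefl_apply]
  module

theorem affRefl_affRefl_affComap (a b : E × ℝ) (x : E) :
    R.affRefl a (R.affRefl b x) = R.affRefl b (R.affRefl (affComap b a) x) := by
  show _ = R.affRefl b (x - R.affVal (affComap b a) x • (affComap b a).1)
  rw [affRefl_sub_smul, ← affVal_affRefl, affComap, sRefl_sRefl]
  rfl

def simpleAffRoots : Set (E × ℝ) := insert (-R.θ, 1) (Set.range fun i => (R.simple i, 0))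

theorem coe_affSimple (i : Fin R.l) : ⇑(R.affSimple i) = R.affRefl (R.simple i, 0) := by
  funext x
  simp [affSimple, affRefl, affVal, sRefl_apply]

theorem coe_affS0 : ⇑R.affS0 = R.affRefl (-R.θ, 1) := by
  funext x
  show R.dualCox • R.θ +ᵥ sRefl R.θ x = _
  simp only [vadd_eq_add, sRefl_apply, affRefl, affVal, pair_neg_right]
  module

/-- `(β, n)` is a real affine root of `Ŵ`: the translations of `Ŵ` are `g` times the lattice
of long roots, whence `n ⟪β, β⟫ ∈ ℤ ⟪θ, θ⟫`. -/
structure IsAffRoot (a : E × ℝ) : Prop where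
  mem_roots : a.1 ∈ R.roots
  lattice : ∃ k : ℤ, a.2 * ⟪a.1, a.1⟫ = k * ⟪R.θ, R.θ⟫

def IsPos (a : E × ℝ) : Prop := 0 < a.2 ∨ a.2 = 0 ∧ a.1 ∈ R.pos

variable {R}

theorem IsAffRoot.affComap {a b : E × ℝ} (hb : R.IsAffRoot b) (ha : R.IsAffRoot a) :
    R.IsAffRoot (affComap b a) := by
  obtain ⟨k, hk⟩ := ha.lattice
  obtain ⟨kb, hkb⟩ := hb.lattice
  obtain ⟨z, hz⟩ := R.crystal b.1 hb.mem_roots a.1 ha.mem_roots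
  have hββ := real_inner_self_pos.2 (R.root_ne_zero _ ha.mem_roots)
  have hbb := real_inner_self_pos.2 (R.root_ne_zero _ hb.mem_roots)
  rw [div_eq_iff hbb.ne'] at hz
  refine ⟨R.sRefl_mem_roots hb.mem_roots ha.mem_roots, k - z * kb, ?_⟩
  simp only [IrredRootSystemData.affComap, LinearIsometryEquiv.inner_map_map, pair, sub_mul,
    mul_assoc, div_mul_cancel₀ _ hββ.ne']
  push_cast
  linear_combination hk - b.2 * hz - z * hkb - b.2 * 2 * real_inner_comm a.1 b.1

theorem isAffRoot_of_mem_simpleAffRoots {b : E × ℝ} (hb : b ∈ R.simpleAffRoots) :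
    R.IsAffRoot b := by
  rcases hb with rfl | ⟨i, rfl⟩
  · exact ⟨R.neg_mem _ R.theta_mem_roots, 1, by simp⟩
  · exact ⟨R.simple_mem_roots i, 0, by simp⟩

theorem IsAffRoot.inner_theta_le {a : E × ℝ} (ha : R.IsAffRoot a) (hn : 0 < a.2) :
    ⟪R.θ, R.θ⟫ ≤ a.2 * ⟪a.1, a.1⟫ := by
  obtain ⟨k, hk⟩ := ha.lattice
  have hββ := real_inner_self_pos.2 (R.root_ne_zero _ ha.mem_roots)
  have hθθ := real_inner_self_pos.2 R.theta_ne_zero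
  have hk0 : (0 : ℝ) < k := pos_of_mul_pos_left (hk ▸ mul_pos hn hββ) hθθ.le
  have hk1 : (1 : ℝ) ≤ k := by exact_mod_cast (show (0 : ℤ) < k by exact_mod_cast hk0)
  rw [hk]
  nlinarith

theorem IsAffRoot.affVal_rho_nonneg {a : E × ℝ} (ha : R.IsAffRoot a) (hpos : R.IsPos a) :
    0 ≤ R.affVal a R.ρ := by
  obtain ⟨β, n⟩ := a
  change 0 < n ∨ n = 0 ∧ β ∈ R.pos at hpos
  have hβ : β ≠ 0 := R.root_ne_zero _ ha.mem_roots
  rcases hpos with hn | ⟨rfl, hβpos⟩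
  · have hββ := real_inner_self_pos.2 hβ
    have hle := mul_le_mul_of_nonneg_left (ha.inner_theta_le hn) R.dualCox_pos.le
    have hρ := R.inner_rho_add_theta_nonneg ha.mem_roots
    dsimp only at hle hρ
    rw [inner_add_right] at hρ
    have hval : R.affVal (β, n) R.ρ = (2 * ⟪R.ρ, β⟫ + R.dualCox * (n * ⟪β, β⟫)) / ⟪β, β⟫ := by
      rw [affVal, pair]
      field_simp
    rw [hval]
    refine div_nonneg ?_ hββ.le
    linarith [R.dualCox_mul_inner_theta, real_inner_self_nonneg (x := R.θ)]
  · simp only [affVal, zero_mul, add_zero]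
    exact (pair_nonneg_iff hβ _).2 (R.inner_rho_nonneg hβpos)

theorem isPos_mk_of_nonneg {β : E} {n : ℝ} (hn : 0 ≤ n) (h : n = 0 → β ∈ R.pos) :
    R.IsPos (β, n) := by
  rcases hn.lt_or_eq with hn | hn
  · exact Or.inl hn
  · exact Or.inr ⟨hn.symm, h hn.symm⟩

theorem isPos_affComap_simple {a : E × ℝ} {i : Fin R.l} (hpos : R.IsPos a)
    (hne : a ≠ (R.simple i, 0)) : R.IsPos (affComap (R.simple i, 0) a) := by
  obtain ⟨β, n⟩ := a
  rcases hpos with hn | ⟨rfl, hβ⟩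
  · exact Or.inl (by simpa [affComap] using hn)
  · exact Or.inr ⟨by simp [affComap], R.sRefl_simple_mem_pos hβ fun h => hne (Prod.ext h rfl)⟩

theorem isPos_sRefl_theta_of_mem_pos {β : E} (hβ : β ∈ R.pos) :
    R.IsPos (sRefl R.θ β, 0 + pair R.θ β) := by
  have hβ0 := R.ne_zero_of_mem_pos hβ
  have hz := (pair_nonneg_iff hβ0 _).2 (R.inner_theta_nonneg hβ)
  refine isPos_mk_of_nonneg (by linarith) fun h0 => ?_
  have hβθ : ⟪β, R.θ⟫ = 0 := by
    rw [zero_add, pair, div_eq_zero_iff, mul_eq_zero] at h0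
    simpa [real_inner_comm, hβ0] using h0
  rwa [sRefl_apply, pair, hβθ, mul_zero, zero_div, zero_smul, sub_zero]

theorem isPos_sRefl_theta_of_ne_neg_theta {β : E} {n : ℝ} (ha : R.IsAffRoot (β, n))
    (hn : 0 < n) (hβθ : β ≠ -R.θ) : R.IsPos (sRefl R.θ β, n + pair R.θ β) := by
  have hβr : β ∈ R.roots := ha.mem_roots
  have hθθ := real_inner_self_pos.2 R.theta_ne_zero
  have hββ := real_inner_self_pos.2 (R.root_ne_zero β hβr)
  have hle : ⟪R.θ, R.θ⟫ ≤ n * ⟪β, β⟫ := ha.inner_theta_le hn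
  have hpair := R.neg_one_le_pair_theta hβr hβθ
  rw [pair, le_div_iff₀ hθθ] at hpair
  have hcomm := real_inner_comm β R.θ
  have hval : (n + pair R.θ β) * ⟪β, β⟫ = n * ⟪β, β⟫ + 2 * ⟪R.θ, β⟫ := by
    rw [pair]
    field_simp
  refine isPos_mk_of_nonneg (nonneg_of_mul_nonneg_left (by linarith) hββ) fun h0 => ?_
  -- Equality forces `⟨β, θ∨⟩ = -1`, so `s_θ β = θ - (-β)` with `-β` positive.
  have hβθ' : 2 * ⟪β, R.θ⟫ = -⟪R.θ, R.θ⟫ := by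
    rw [h0, zero_mul] at hval
    linarith
  have hneg : -β ∈ R.pos := R.neg_mem_pos_of_not_mem_pos hβr fun hβpos => by
    linarith [R.inner_theta_nonneg hβpos]
  have hrefl : sRefl R.θ β = R.θ - -β := by
    rw [sRefl_apply, pair, hβθ', neg_div, div_self hθθ.ne']
    module
  rw [hrefl]
  exact R.theta_sub_mem_pos hneg (hrefl ▸ R.sRefl_mem_roots R.theta_mem_roots hβr)

theorem isPos_sRefl_theta_neg_theta {n : ℝ} (ha : R.IsAffRoot (-R.θ, n)) (hn : 0 < n)
    (hne : n ≠ 1) : R.IsPos (sRefl R.θ (-R.θ), n + pair R.θ (-R.θ)) := by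
  have hθθ := real_inner_self_pos.2 R.theta_ne_zero
  obtain ⟨k, hk⟩ := ha.lattice
  rw [inner_neg_neg] at hk
  have hnk : n = k := mul_right_cancel₀ hθθ.ne' hk
  have h1 : (1 : ℝ) ≤ n := le_of_mul_le_mul_right (by simpa using ha.inner_theta_le hn) hθθ
  have hk2 : (2 : ℝ) ≤ n := by
    rw [hnk] at h1 hne ⊢
    have : (1 : ℤ) < k :=
      lt_of_le_of_ne (by exact_mod_cast h1) fun h => hne (by exact_mod_cast h.symm)
    exact_mod_cast this
  rw [pair_neg_right, pair_self R.theta_ne_zero, map_neg, sRefl_self, neg_neg]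
  exact isPos_mk_of_nonneg (by linarith) fun _ => R.θ_mem_pos

theorem isPos_affComap_neg_theta {a : E × ℝ} (ha : R.IsAffRoot a) (hpos : R.IsPos a)
    (hne : a ≠ (-R.θ, 1)) : R.IsPos (affComap (-R.θ, 1) a) := by
  obtain ⟨β, n⟩ := a
  have hcomap : affComap (-R.θ, 1) (β, n) = (sRefl R.θ β, n + pair R.θ β) := by
    simp [affComap, sRefl_neg, pair_neg_left]
  rw [hcomap]
  rcases hpos with hn | ⟨rfl, hβ⟩
  · by_cases hβθ : β = -R.θ
    · subst hβθ
      exact isPos_sRefl_theta_neg_theta ha hn fun h => hne (by rw [h])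
    · exact isPos_sRefl_theta_of_ne_neg_theta ha hn hβθ
  · exact isPos_sRefl_theta_of_mem_pos hβ

theorem IsPos.affComap {a b : E × ℝ} (hb : b ∈ R.simpleAffRoots) (ha : R.IsAffRoot a)
    (hpos : R.IsPos a) (hne : a ≠ b) : R.IsPos (affComap b a) := by
  rcases hb with rfl | ⟨i, rfl⟩
  · exact isPos_affComap_neg_theta ha hpos hne
  · exact isPos_affComap_simple hpos hne

variable (R) in
def reflectionsOf (s : Set (E × ℝ)) : Set (E ≃ᵃ[ℝ] E) := {e | ∃ b ∈ s, ⇑e = R.affRefl b}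

theorem inv_mem_reflectionsOf {s : Set (E × ℝ)} {e : E ≃ᵃ[ℝ] E} (he : e ∈ R.reflectionsOf s) :
    e⁻¹ ∈ R.reflectionsOf s := by
  obtain ⟨b, hbs, hb⟩ := he
  have : e * e = 1 := AffineEquiv.ext fun x => by
    simp only [AffineEquiv.coe_mul, Function.comp_apply, hb, affRefl_affRefl]
    rfl
  rw [inv_eq_of_mul_eq_one_left this]
  exact ⟨b, hbs, hb⟩

theorem exists_list_of_mem_closure_reflectionsOf {s : Set (E × ℝ)} {w : E ≃ᵃ[ℝ] E}
    (hw : w ∈ Subgroup.closure (R.reflectionsOf s)) :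
    ∃ L : List (E ≃ᵃ[ℝ] E), (∀ e ∈ L, e ∈ R.reflectionsOf s) ∧ L.prod = w :=
  Subgroup.exists_list_of_mem_closure_of_inv_mem (fun _ => inv_mem_reflectionsOf) hw

variable (R)

theorem affGens_eq : Set.range R.affSimple ∪ {R.affS0} = R.reflectionsOf R.simpleAffRoots := by
  ext e
  constructor
  · rintro (⟨i, rfl⟩ | rfl)
    · exact ⟨_, Or.inr ⟨i, rfl⟩, R.coe_affSimple i⟩
    · exact ⟨_, Or.inl rfl, R.coe_affS0⟩
  · rintro ⟨b, rfl | ⟨i, rfl⟩, he⟩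
    · exact Or.inr (AffineEquiv.coeFn_injective (he.trans R.coe_affS0.symm))
    · exact Or.inl ⟨i, AffineEquiv.coeFn_injective ((R.coe_affSimple i).trans he.symm)⟩

theorem affWperp_le_closure (φ : E) :
    R.affWperp φ ≤
      Subgroup.closure (R.reflectionsOf {b ∈ R.simpleAffRoots | ⟪b.1, φ⟫ = 0}) := by
  refine Subgroup.closure_le _ |>.2 ?_
  rintro e (⟨i, hi, rfl⟩ | ⟨hθ, rfl⟩) <;> apply Subgroup.subset_closure
  · exact ⟨_, ⟨Or.inr ⟨i, rfl⟩, hi⟩, R.coe_affSimple i⟩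
  · exact ⟨_, ⟨Or.inl rfl, by rw [inner_neg_left, hθ, neg_zero]⟩, R.coe_affS0⟩

variable {R}

theorem affLen_prod_le_length {L : List (E ≃ᵃ[ℝ] E)}
    (hL : ∀ e ∈ L, e ∈ R.reflectionsOf R.simpleAffRoots) : R.affLen L.prod ≤ L.length :=
  Nat.sInf_le ⟨L.get, fun j => R.affGens_eq ▸ hL _ (L.get_mem j), by rw [List.ofFn_get]⟩

theorem exists_list_length_eq_affLen {w : E ≃ᵃ[ℝ] E}
    (hw : w ∈ Subgroup.closure (R.reflectionsOf R.simpleAffRoots)) :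
    ∃ L : List (E ≃ᵃ[ℝ] E), (∀ e ∈ L, e ∈ R.reflectionsOf R.simpleAffRoots) ∧
      L.prod = w ∧ L.length = R.affLen w := by
  obtain ⟨L₀, hL₀, rfl⟩ := exists_list_of_mem_closure_reflectionsOf hw
  have hne : {k : ℕ | ∃ f : Fin k → E ≃ᵃ[ℝ] E,
      (∀ j, f j ∈ Set.range R.affSimple ∪ {R.affS0}) ∧ L₀.prod = (List.ofFn f).prod}.Nonempty :=
    ⟨L₀.length, L₀.get, fun j => R.affGens_eq ▸ hL₀ _ (L₀.get_mem j), by rw [List.ofFn_get]⟩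
  obtain ⟨f, hf, hprod⟩ := Nat.sInf_mem hne
  refine ⟨List.ofFn f, fun e he => ?_, hprod.symm, List.length_ofFn⟩
  obtain ⟨j, rfl⟩ := List.mem_ofFn.1 he
  exact R.affGens_eq ▸ hf j

theorem prod_cons_apply {e : E ≃ᵃ[ℝ] E} {b : E × ℝ} (he : ⇑e = R.affRefl b)
    (T : List (E ≃ᵃ[ℝ] E)) (x : E) : (e :: T).prod x = R.affRefl b (T.prod x) := by
  rw [List.prod_cons, AffineEquiv.coe_mul, Function.comp_apply, he]

theorem exists_shorter_word_of_affVal_neg {L : List (E ≃ᵃ[ℝ] E)}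
    (hL : ∀ e ∈ L, e ∈ R.reflectionsOf R.simpleAffRoots) {a : E × ℝ} (ha : R.IsAffRoot a)
    (hpos : R.IsPos a) (hneg : R.affVal a (L.prod R.ρ) < 0) :
    ∃ L' : List (E ≃ᵃ[ℝ] E), (∀ e ∈ L', e ∈ R.reflectionsOf R.simpleAffRoots) ∧
      L'.length + 1 = L.length ∧ ∀ x, R.affRefl a (L.prod x) = L'.prod x := by
  induction L generalizing a with
  | nil => exact absurd (ha.affVal_rho_nonneg hpos) (not_le.2 hneg)
  | cons e T ih =>
    obtain ⟨⟨b, hb, he⟩, hT⟩ := List.forall_mem_cons.1 hL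
    by_cases hab : a = b
    · subst hab
      exact ⟨T, hT, rfl, fun x => by rw [prod_cons_apply he, affRefl_affRefl]⟩
    rw [prod_cons_apply he, affVal_affRefl] at hneg
    obtain ⟨T', hT', hlen, hT'x⟩ :=
      ih hT ((isAffRoot_of_mem_simpleAffRoots hb).affComap ha) (hpos.affComap hb ha hab) hneg
    refine ⟨e :: T', List.forall_mem_cons.2 ⟨⟨b, hb, he⟩, hT'⟩, by simp [hlen], fun x => ?_⟩
    rw [prod_cons_apply he, prod_cons_apply he, affRefl_affRefl_affComap, hT'x]

theorem affLen_affSimple_mul_lt {s : Set (E × ℝ)} (hs : s ⊆ R.simpleAffRoots) {w : E ≃ᵃ[ℝ] E}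
    (hw : w ∈ Subgroup.closure (R.reflectionsOf s)) {i : Fin R.l}
    (hneg : ⟪w R.ρ, R.simple i⟫ < 0) : R.affLen (R.affSimple i * w) < R.affLen w := by
  have hw' : w ∈ Subgroup.closure (R.reflectionsOf R.simpleAffRoots) :=
    Subgroup.closure_mono (by rintro e ⟨b, hb, he⟩; exact ⟨b, hs hb, he⟩) hw
  obtain ⟨L, hL, rfl, hlen⟩ := exists_list_length_eq_affLen hw'
  have hval : R.affVal (R.simple i, 0) (L.prod R.ρ) < 0 := by
    rw [← not_le] at hneg ⊢
    simpa [affVal, pair_nonneg_iff (R.ne_zero_of_mem_pos (R.simple_mem_pos i))] using hneg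
  obtain ⟨L', hL', hlen', hL'x⟩ := exists_shorter_word_of_affVal_neg hL
    (isAffRoot_of_mem_simpleAffRoots (Or.inr ⟨i, rfl⟩)) (Or.inr ⟨rfl, R.simple_mem_pos i⟩) hval
  have hprod : R.affSimple i * L.prod = L'.prod := AffineEquiv.ext fun x => by
    rw [AffineEquiv.coe_mul, Function.comp_apply, coe_affSimple, hL'x]
  have := affLen_prod_le_length hL'
  rw [hprod]
  omega

theorem affVal_rho_nonneg_of_inner_ne_zero {φ : E} {L : List (E ≃ᵃ[ℝ] E)}
    (hL : ∀ e ∈ L, e ∈ R.reflectionsOf {b ∈ R.simpleAffRoots | ⟪b.1, φ⟫ = 0}) {a : E × ℝ}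
    (ha : R.IsAffRoot a) (hpos : R.IsPos a) (haφ : ⟪a.1, φ⟫ ≠ 0) :
    0 ≤ R.affVal a (L.prod R.ρ) := by
  induction L generalizing a with
  | nil => exact ha.affVal_rho_nonneg hpos
  | cons e T ih =>
    obtain ⟨⟨b, ⟨hb, hbφ⟩, he⟩, hT⟩ := List.forall_mem_cons.1 hL
    have hab : a ≠ b := fun h => haφ (h ▸ hbφ)
    rw [prod_cons_apply he, affVal_affRefl]
    refine ih hT ((isAffRoot_of_mem_simpleAffRoots hb).affComap ha) (hpos.affComap hb ha hab) ?_
    rwa [affComap, inner_sRefl_of_inner_eq_zero hbφ]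

theorem inner_simple_nonneg_of_inner_ne_zero {φ : E} {w : E ≃ᵃ[ℝ] E} (hw : w ∈ R.affWperp φ)
    {i : Fin R.l} (hi : ⟪R.simple i, φ⟫ ≠ 0) : 0 ≤ ⟪w R.ρ, R.simple i⟫ := by
  obtain ⟨L, hL, rfl⟩ := exists_list_of_mem_closure_reflectionsOf (R.affWperp_le_closure φ hw)
  have := affVal_rho_nonneg_of_inner_ne_zero hL
    (isAffRoot_of_mem_simpleAffRoots (Or.inr ⟨i, rfl⟩)) (Or.inr ⟨rfl, R.simple_mem_pos i⟩) hi
  simpa [affVal, pair_nonneg_iff (R.ne_zero_of_mem_pos (R.simple_mem_pos i))] using this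

end IrredRootSystemData

theorem minimal_coset_representative_rho_dominant (R : IrredRootSystemData V)
    (φ : V) (what : V ≃ᵃ[ℝ] V) (hwhat : what ∈ R.affWperp φ)
    (hmin : ∀ u ∈ R.finWperp φ, R.affLen what ≤ R.affLen (u * what)) :
    ∀ i : Fin R.l, 0 ≤ ⟪what R.ρ, R.simple i⟫ := by
  intro i
  by_cases hperp : ⟪R.simple i, φ⟫ = 0
  · by_contra! hneg
    have hshorter :=
      R.affLen_affSimple_mul_lt (Set.sep_subset _ _) (R.affWperp_le_closure φ hwhat) hneg
    exact (hmin _ (Subgroup.subset_closure ⟨i, hperp, rfl⟩)).not_gt hshorter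
  · exact R.inner_simple_nonneg_of_inner_ne_zero hwhat hperp
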